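/- For the tree-indexed Markov chain X, with γ_j = 2ν_{1,j}({(1,1)}) + ν_{1,j}({(1,0),(0,1)}) and η_j = 1 − ν_{0,j}({(0,0)}), the expected number of state-1 vertices satisfies E[#S_j | F_{j−1}] ≤ 2^j η_{j−1} + γ_{j−1}·#S_{j−1} for every j ≥ 1, and consequently E[#S_j] ≤ Σ_{k=−1}^{j−1} 2^{k+1} η_k ∏_{ℓ=k+1}^{j−1} γ_ℓ (with the convention η_{−1} = 1). -/

import Mathlib

open MeasureTheory
open scoped ENNReal

/-- The finite set of binary words of length `j` (the generation-`j` vertices of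
the binary tree). -/
def words (j : ℕ) : Finset (List Bool) :=
  Finset.image (fun f : Fin j → Bool => List.ofFn f) Finset.univ

/-- `v` is a strict descendant of `u` in the binary tree (`v ∈ uU*`). -/
def StrictDesc (u v : List Bool) : Prop := u <+: v ∧ u ≠ v

/-- The σ-field generated by the states `X_v`, for `v` in a set `V` of vertices. -/
def genField {Ω : Type*} [MeasurableSpace Ω] (X : List Bool → Ω → Bool)
    (V : Set (List Bool)) : MeasurableSpace Ω :=
  ⨆ v ∈ V, MeasurableSpace.comap (X v) ⊤

/-- The "past" σ-field `G_u = σ(X_v, v ∉ uU*)`. -/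
def pastField {Ω : Type*} [MeasurableSpace Ω] (X : List Bool → Ω → Bool)
    (u : List Bool) : MeasurableSpace Ω :=
  genField X {v | ¬ StrictDesc u v}

/-- The σ-field `F_j` generated by the states of vertices of generation at most `j`. -/
def upToField {Ω : Type*} [MeasurableSpace Ω] (X : List Bool → Ω → Bool)
    (j : ℕ) : MeasurableSpace Ω :=
  genField X {v | v.length ≤ j}

/-- The Markov condition: conditionally on the past `G_u`, the pair of states
`(X_{u0}, X_{u1})` has law `ν_{X_u, j(u)}`. -/
def MarkovCond {Ω : Type*} [MeasurableSpace Ω] (μ : Measure Ω)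
    (X : List Bool → Ω → Bool) (ν : Bool → ℕ → Measure (Bool × Bool)) : Prop :=
  ∀ u : List Bool, ∀ A : Set (Bool × Bool), ∀ B : Set Ω,
    MeasurableSet[pastField X u] B →
    μ (B ∩ {ω | (X (u ++ [false]) ω, X (u ++ [true]) ω) ∈ A}) =
      ∫⁻ ω in B, ν (X u ω) u.length A ∂μ

/-- `#S_j`: the number of generation-`j` vertices in state `1`. -/
noncomputable def Scard {Ω : Type*} (X : List Bool → Ω → Bool) (j : ℕ) (ω : Ω) : ℕ :=
  ((words j).filter fun u => X u ω = true).card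

/-- `#S̃_j`: the number of generation-`j` vertices in state `1` whose parent is
in state `0`. -/
noncomputable def Stcard {Ω : Type*} (X : List Bool → Ω → Bool) (j : ℕ) (ω : Ω) : ℕ :=
  ((words j).filter fun u => X u ω = true ∧ X u.dropLast ω = false).card

/-- `γ_j = 2 ν_{1,j}({(1,1)}) + ν_{1,j}({(1,0),(0,1)})`. -/
noncomputable def gammaCoef (ν : Bool → ℕ → Measure (Bool × Bool)) (j : ℕ) : ℝ :=
  2 * (ν true j {((true, true) : Bool × Bool)}).toReal +
    (ν true j {((true, false) : Bool × Bool), ((false, true) : Bool × Bool)}).toReal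

/-- `η_j = 1 − ν_{0,j}({(0,0)})`. -/
noncomputable def etaCoef (ν : Bool → ℕ → Measure (Bool × Bool)) (j : ℕ) : ℝ :=
  1 - (ν false j {((false, false) : Bool × Bool)}).toReal

/-!
By the Markov condition, given `F_j` a generation-`j` vertex `w` has on average
`∫ (p.1 + p.2) dν_{X_w, j}(p)` children in state 1: exactly `γ_j` if `X_w = 1`, and at most
`2 η_j` if `X_w = 0`, since the count is at most 2 and vanishes on `(0,0)`.
Summing over the `2^j` vertices of generation `j` gives
`E[#S_{j+1} | F_j] ≤ 2^{j+1} η_j + γ_j #S_j`. Taking expectations yields the affine recursion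
`E[#S_{j+1}] ≤ 2^{j+1} η_j + γ_j E[#S_j]` with `γ_j ≥ 0`, which unrolls to the stated sum.
-/

open Finset

lemma mem_words {u : List Bool} {j : ℕ} : u ∈ words j ↔ u.length = j := by
  constructor
  · intro h
    obtain ⟨f, -, rfl⟩ := mem_image.1 h
    exact List.length_ofFn
  · rintro rfl
    exact mem_image.2 ⟨u.get, mem_univ _, List.ofFn_get u⟩

lemma card_words (j : ℕ) : #(words j) = 2 ^ j := by
  simp [words, card_image_of_injective _ List.ofFn_injective]

lemma words_succ (j : ℕ) :
    words (j + 1) = (words j ×ˢ univ).image fun p : List Bool × Bool => p.1 ++ [p.2] := by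
  ext u
  simp only [mem_words, mem_image, mem_product, mem_univ, and_true, Prod.exists]
  constructor
  · intro h
    have hne : u ≠ [] := by rintro rfl; simp at h
    exact ⟨u.dropLast, u.getLast hne, by simp [h], List.dropLast_append_getLast hne⟩
  · rintro ⟨w, b, hw, rfl⟩
    simp [hw]

lemma sum_words_succ {M : Type*} [AddCommMonoid M] (f : List Bool → M) (j : ℕ) :
    ∑ u ∈ words (j + 1), f u = ∑ w ∈ words j, (f (w ++ [false]) + f (w ++ [true])) := by
  have hinj : Function.Injective fun p : List Bool × Bool => p.1 ++ [p.2] := by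
    rintro ⟨w, b⟩ ⟨w', b'⟩ h
    obtain ⟨rfl, h⟩ := List.append_inj' h rfl
    simp_all
  rw [words_succ, sum_image fun p _ q _ h => hinj h, sum_product]
  simp only [Fintype.sum_bool, add_comm]

section Counting

variable {Ω : Type*} (X : List Bool → Ω → Bool)

def childPair (u : List Bool) (ω : Ω) : Bool × Bool := (X (u ++ [false]) ω, X (u ++ [true]) ω)

def countTrue (p : Bool × Bool) : ℕ := p.1.toNat + p.2.toNat

lemma Scard_eq_sum (j : ℕ) (ω : Ω) : Scard X j ω = ∑ u ∈ words j, (X u ω).toNat := by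
  rw [Scard, card_filter]
  exact sum_congr rfl fun u _ => by cases X u ω <;> rfl

lemma Scard_le (j : ℕ) (ω : Ω) : Scard X j ω ≤ 2 ^ j :=
  card_words j ▸ card_filter_le _ _

lemma Scard_succ (j : ℕ) (ω : Ω) :
    Scard X (j + 1) ω = ∑ w ∈ words j, countTrue (childPair X w ω) := by
  rw [Scard_eq_sum, sum_words_succ]
  rfl

lemma measurable_Scard {m : MeasurableSpace Ω} {j : ℕ}
    (hX : ∀ u ∈ words j, Measurable[m] (X u)) : Measurable[m] fun ω => (Scard X j ω : ℝ) := by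
  simp_rw [Scard_eq_sum, Nat.cast_sum]
  exact Finset.measurable_sum _ fun u hu => by have := hX u hu; fun_prop

end Counting

section Measurability

variable {Ω : Type*} [MeasurableSpace Ω] {X : List Bool → Ω → Bool}

lemma genField_le (hX : ∀ u, Measurable (X u)) (V : Set (List Bool)) :
    genField X V ≤ ‹MeasurableSpace Ω› :=
  iSup₂_le fun v _ => (hX v).comap_le

lemma measurable_genField {V : Set (List Bool)} {v : List Bool} (hv : v ∈ V) :
    Measurable[genField X V] (X v) :=
  measurable_iff_comap_le.2 <|
    le_iSup₂ (f := fun (v : List Bool) (_ : v ∈ V) => MeasurableSpace.comap (X v) ⊤) v hv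

lemma upToField_le_pastField {w : List Bool} : upToField X w.length ≤ pastField X w := by
  refine biSup_mono fun v (hv : v.length ≤ w.length) ⟨hpre, hne⟩ => hne ?_
  exact hpre.eq_of_length (le_antisymm hpre.length_le hv)

@[fun_prop]
lemma measurable_childPair (hX : ∀ u, Measurable (X u)) (u : List Bool) :
    Measurable (childPair X u) :=
  (hX _).prodMk (hX _)

lemma integrable_Scard {μ : Measure Ω} [IsFiniteMeasure μ] (hX : ∀ u, Measurable (X u)) (j : ℕ) :
    Integrable (fun ω => (Scard X j ω : ℝ)) μ :=
  .of_bound (measurable_Scard X fun u _ => hX u).aestronglyMeasurable (2 ^ j) <|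
    .of_forall fun ω => by simpa using (Nat.cast_le (α := ℝ)).2 (Scard_le X j ω)

end Measurability

section Markov

variable {Ω : Type*} [MeasurableSpace Ω] {μ : Measure Ω} {X : List Bool → Ω → Bool}
  {ν : Bool → ℕ → Measure (Bool × Bool)} {u : List Bool} {B : Set Ω}

lemma map_childPair_restrict (hX : ∀ u, Measurable (X u)) (hM : MarkovCond μ X ν)
    (hB : MeasurableSet[pastField X u] B) :
    (μ.restrict B).map (childPair X u) = (μ.restrict B).bind fun ω => ν (X u ω) u.length := by
  ext A hA
  rw [Measure.map_apply (by fun_prop) hA, Measure.restrict_apply (measurable_childPair hX u hA),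
    Set.inter_comm, Measure.bind_apply hA (by fun_prop)]
  exact hM u A B hB

lemma setLIntegral_comp_childPair (hX : ∀ u, Measurable (X u)) (hM : MarkovCond μ X ν)
    (hB : MeasurableSet[pastField X u] B) (φ : Bool × Bool → ℝ≥0∞) :
    ∫⁻ ω in B, φ (childPair X u ω) ∂μ = ∫⁻ ω in B, ∫⁻ p, φ p ∂ν (X u ω) u.length ∂μ := by
  rw [← lintegral_map Measurable.of_discrete (measurable_childPair hX u),
    map_childPair_restrict hX hM hB, Measure.lintegral_bind (by fun_prop) (by fun_prop)]

end Markov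

section Coefficients

variable {ν : Bool → ℕ → Measure (Bool × Bool)} {j : ℕ}

lemma gammaCoef_nonneg : 0 ≤ gammaCoef ν j := by
  unfold gammaCoef; positivity

lemma etaCoef_nonneg [IsProbabilityMeasure (ν false j)] : 0 ≤ etaCoef ν j :=
  sub_nonneg.2 <| ENNReal.toReal_le_of_le_ofReal zero_le_one (by simpa using prob_le_one)

lemma ofReal_gammaCoef [IsFiniteMeasure (ν true j)] :
    ENNReal.ofReal (gammaCoef ν j) =
      2 * ν true j {(true, true)} + ν true j {(true, false), (false, true)} := by
  rw [gammaCoef, ENNReal.ofReal_add (by positivity) ENNReal.toReal_nonneg,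
    ENNReal.ofReal_mul zero_le_two, ENNReal.ofReal_ofNat, ENNReal.ofReal_toReal (by finiteness),
    ENNReal.ofReal_toReal (by finiteness)]

lemma lintegral_countTrue_true [IsFiniteMeasure (ν true j)] :
    ∫⁻ p, (countTrue p : ℝ≥0∞) ∂ν true j = ENNReal.ofReal (gammaCoef ν j) := by
  rw [ofReal_gammaCoef, Set.insert_eq, measure_union (by simp) (measurableSet_singleton _),
    lintegral_fintype]
  simp [Fintype.sum_prod_type, countTrue]
  ring

lemma lintegral_countTrue_false_le [IsProbabilityMeasure (ν false j)] :
    ∫⁻ p, (countTrue p : ℝ≥0∞) ∂ν false j ≤ 2 * ENNReal.ofReal (etaCoef ν j) := by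
  have hη : ENNReal.ofReal (etaCoef ν j) = ν false j {(false, false)}ᶜ := by
    rw [etaCoef, ENNReal.ofReal_sub _ ENNReal.toReal_nonneg, ENNReal.ofReal_one,
      ENNReal.ofReal_toReal (measure_ne_top _ _), prob_compl_eq_one_sub (measurableSet_singleton _)]
  have hcount : ∀ p, (countTrue p : ℝ≥0∞) ≤
      ({(false, false)}ᶜ : Set (Bool × Bool)).indicator (fun _ => 2) p := by
    rintro ⟨_ | _, _ | _⟩ <;> simp [countTrue]
  calc ∫⁻ p, (countTrue p : ℝ≥0∞) ∂ν false j
      ≤ ∫⁻ p, ({(false, false)}ᶜ : Set (Bool × Bool)).indicator (fun _ => 2) p ∂ν false j :=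
        lintegral_mono hcount
    _ = 2 * ENNReal.ofReal (etaCoef ν j) := by
        rw [lintegral_indicator_const (measurableSet_singleton _).compl, hη]

lemma lintegral_countTrue_le (hν : ∀ b, IsProbabilityMeasure (ν b j)) (b : Bool) :
    ∫⁻ p, (countTrue p : ℝ≥0∞) ∂ν b j ≤
      ENNReal.ofReal (2 * etaCoef ν j + gammaCoef ν j * b.toNat) := by
  cases b
  · simpa [ENNReal.ofReal_mul] using lintegral_countTrue_false_le
  · rw [lintegral_countTrue_true]
    exact ENNReal.ofReal_le_ofReal (by simp [etaCoef_nonneg])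

end Coefficients

lemma integral_le_integral_of_lintegral_ofReal_le {α : Type*} [MeasurableSpace α]
    {μ : Measure α} {f g : α → ℝ} (hf : Integrable f μ) (hg : Integrable g μ) (hf₀ : 0 ≤ᵐ[μ] f)
    (hg₀ : 0 ≤ᵐ[μ] g) (h : ∫⁻ x, ENNReal.ofReal (f x) ∂μ ≤ ∫⁻ x, ENNReal.ofReal (g x) ∂μ) :
    ∫ x, f x ∂μ ≤ ∫ x, g x ∂μ := by
  rwa [← ENNReal.ofReal_le_ofReal_iff (integral_nonneg_of_ae hg₀),
    ofReal_integral_eq_lintegral_ofReal hf hf₀, ofReal_integral_eq_lintegral_ofReal hg hg₀]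

lemma condExp_ae_le_of_forall_setIntegral_le {α : Type*} {m m₀ : MeasurableSpace α}
    {μ : Measure α} (hm : m ≤ m₀) [SigmaFinite (μ.trim hm)] {f g : α → ℝ}
    (hf : Integrable f μ) (hg : Integrable g μ) (hgm : StronglyMeasurable[m] g)
    (h : ∀ s, MeasurableSet[m] s → ∫ x in s, f x ∂μ ≤ ∫ x in s, g x ∂μ) :
    μ[f | m] ≤ᵐ[μ] g := by
  refine ae_le_of_ae_le_trim <| ae_le_of_forall_setIntegral_le
    (integrable_condExp.trim hm stronglyMeasurable_condExp) (hg.trim hm hgm) fun s hs _ => ?_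
  rw [← setIntegral_trim hm stronglyMeasurable_condExp hs, ← setIntegral_trim hm hgm hs,
    setIntegral_condExp hm hf hs]
  exact h s hs

lemma le_sum_mul_prod_Ico_of_le_add_mul {x a c : ℕ → ℝ} (hc : ∀ n, 0 ≤ c n) (h₀ : x 0 ≤ a 0)
    (hsucc : ∀ n, x (n + 1) ≤ a (n + 1) + c n * x n) (n : ℕ) :
    x n ≤ ∑ k ∈ range (n + 1), a k * ∏ ℓ ∈ Ico k n, c ℓ := by
  induction n with
  | zero => simpa using h₀
  | succ n ih =>
    calc x (n + 1) ≤ a (n + 1) + c n * x n := hsucc n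
      _ ≤ a (n + 1) + c n * ∑ k ∈ range (n + 1), a k * ∏ ℓ ∈ Ico k n, c ℓ := by
        gcongr; exact hc n
      _ = ∑ k ∈ range (n + 2), a k * ∏ ℓ ∈ Ico k (n + 1), c ℓ := by
        rw [sum_range_succ _ (n + 1), Ico_self, prod_empty, mul_one, add_comm, mul_sum]
        congr 1
        refine sum_congr rfl fun k hk => ?_
        rw [prod_Ico_succ_top (mem_range_succ_iff.1 hk)]
        ring

section Step

variable {Ω : Type*} [MeasurableSpace Ω] {μ : Measure Ω} {X : List Bool → Ω → Bool}
  {ν : Bool → ℕ → Measure (Bool × Bool)} {j : ℕ} {B : Set Ω}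

lemma setLIntegral_Scard_succ_le (hX : ∀ u, Measurable (X u))
    (hν : ∀ b, IsProbabilityMeasure (ν b j)) (hM : MarkovCond μ X ν)
    (hB : MeasurableSet[upToField X j] B) :
    ∫⁻ ω in B, (Scard X (j + 1) ω : ℝ≥0∞) ∂μ ≤
      ∫⁻ ω in B, ENNReal.ofReal (2 ^ (j + 1) * etaCoef ν j + gammaCoef ν j * Scard X j ω) ∂μ := by
  have hsum ω : ENNReal.ofReal (2 ^ (j + 1) * etaCoef ν j + gammaCoef ν j * Scard X j ω) =
      ∑ w ∈ words j, ENNReal.ofReal (2 * etaCoef ν j + gammaCoef ν j * (X w ω).toNat) := by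
    have := etaCoef_nonneg (ν := ν) (j := j)
    have := gammaCoef_nonneg (ν := ν) (j := j)
    rw [← ENNReal.ofReal_sum_of_nonneg fun _ _ => by positivity, sum_add_distrib, sum_const,
      card_words, ← mul_sum, Scard_eq_sum]
    push_cast
    ring_nf
  calc ∫⁻ ω in B, (Scard X (j + 1) ω : ℝ≥0∞) ∂μ
      = ∑ w ∈ words j, ∫⁻ ω in B, (countTrue (childPair X w ω) : ℝ≥0∞) ∂μ := by
        simp_rw [Scard_succ, Nat.cast_sum]
        exact lintegral_finsetSum _ fun w _ => by fun_prop
    _ = ∑ w ∈ words j, ∫⁻ ω in B, ∫⁻ p, (countTrue p : ℝ≥0∞) ∂ν (X w ω) j ∂μ := by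
        refine sum_congr rfl fun w hw => ?_
        obtain rfl := mem_words.1 hw
        exact setLIntegral_comp_childPair hX hM (upToField_le_pastField B hB)
          fun p => (countTrue p : ℝ≥0∞)
    _ ≤ ∑ w ∈ words j, ∫⁻ ω in B,
          ENNReal.ofReal (2 * etaCoef ν j + gammaCoef ν j * (X w ω).toNat) ∂μ := by
        gcongr with w _ ω
        exact lintegral_countTrue_le hν _
    _ = _ := by
        simp_rw [hsum]
        exact (lintegral_finsetSum _ fun w _ => by fun_prop).symm

lemma setIntegral_Scard_succ_le [IsFiniteMeasure μ] (hX : ∀ u, Measurable (X u))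
    (hν : ∀ b, IsProbabilityMeasure (ν b j)) (hM : MarkovCond μ X ν)
    (hB : MeasurableSet[upToField X j] B) :
    ∫ ω in B, (Scard X (j + 1) ω : ℝ) ∂μ ≤
      ∫ ω in B, (2 ^ (j + 1) * etaCoef ν j + gammaCoef ν j * Scard X j ω) ∂μ := by
  have := etaCoef_nonneg (ν := ν) (j := j)
  have := gammaCoef_nonneg (ν := ν) (j := j)
  refine integral_le_integral_of_lintegral_ofReal_le (integrable_Scard hX _).restrict
    ((integrable_const _).add ((integrable_Scard hX j).const_mul _)).restrict
    (ae_of_all _ fun _ => by positivity) (ae_of_all _ fun _ => by positivity) ?_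
  simpa only [ENNReal.ofReal_natCast] using setLIntegral_Scard_succ_le hX hν hM hB

end Step

/-- `E[#S_j | F_{j−1}] ≤ 2^j η_{j−1} + γ_{j−1} #S_{j−1}` a.e. for every
`j ≥ 1`, and consequently
`E[#S_j] ≤ Σ_{k=−1}^{j−1} 2^{k+1} η_k ∏_{ℓ=k+1}^{j−1} γ_ℓ` (with `η_{−1} = 1`;
the sum is reindexed by `k+1 ∈ {0,…,j}`). -/
theorem stmt9 {Ω : Type*} [MeasurableSpace Ω] (μ : Measure Ω) [IsProbabilityMeasure μ]
    (X : List Bool → Ω → Bool) (hX : ∀ u, Measurable (X u))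
    (ν : Bool → ℕ → Measure (Bool × Bool)) (hν : ∀ b j, IsProbabilityMeasure (ν b j))
    (hM : MarkovCond μ X ν) :
    (∀ j : ℕ, 1 ≤ j → ∀ᵐ ω ∂μ,
      (μ[(fun ω' => (Scard X j ω' : ℝ)) | upToField X (j - 1)]) ω ≤
        2 ^ j * etaCoef ν (j - 1) + gammaCoef ν (j - 1) * (Scard X (j - 1) ω : ℝ)) ∧
    ∀ j : ℕ, ∫ ω, (Scard X j ω : ℝ) ∂μ ≤
      ∑ k ∈ Finset.range (j + 1),
        2 ^ k * (if k = 0 then 1 else etaCoef ν (k - 1)) *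
          ∏ ℓ ∈ Finset.Ico k j, gammaCoef ν ℓ := by
  have step i {B} := setIntegral_Scard_succ_le (B := B) hX (fun b => hν b i) hM
  refine ⟨fun j hj => ?_, le_sum_mul_prod_Ico_of_le_add_mul (fun _ => gammaCoef_nonneg) ?_ ?_⟩
  · obtain ⟨i, rfl⟩ := Nat.exists_eq_add_of_le' hj
    have hS : Measurable[upToField X i] fun ω => (Scard X i ω : ℝ) :=
      measurable_Scard X fun u hu => measurable_genField (mem_words.1 hu).le
    exact condExp_ae_le_of_forall_setIntegral_le (genField_le hX _) (integrable_Scard hX _)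
      ((integrable_const _).add ((integrable_Scard hX i).const_mul _))
      (measurable_const.add (measurable_const.mul hS)).stronglyMeasurable fun B hB => step i hB
  · calc ∫ ω, (Scard X 0 ω : ℝ) ∂μ ≤ ∫ _, 1 ∂μ :=
          integral_mono (integrable_Scard hX 0) (integrable_const 1) fun ω => by
            simpa using (Nat.cast_le (α := ℝ)).2 (Scard_le X 0 ω)
      _ = _ := by simp
  · intro i
    have h := step i MeasurableSet.univ
    rw [integral_add (integrable_const _) ((integrable_Scard hX i).const_mul _)] at h
    simpa [integral_const_mul] using h
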